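/- The inverse of R_Cfg is a presimulation: if cfg₂ ⟶CESH cfg₂' and R_Cfg cfg₁ cfg₂, then there exists cfg₁' with cfg₁ ⟶CES cfg₁'. -/

import Mathlib

mutual
inductive Instr : Type where
  | var : Nat → Instr
  | clos : Code → Instr
  | appl : Instr
  | lit : Nat → Instr
  | op : (Nat → Nat → Nat) → Instr
inductive Code : Type where
  | seq : Instr → Code → Code
  | cond : Code → Code → Code
  | END : Code
  | RET : Code
end

namespace CES

inductive Value : Type where
  | nat : Nat → Value
  | clos : Code → List Value → Value

abbrev Env := List Value

inductive StackElem : Type where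
  | val : Value → StackElem
  | cont : Code → Env → StackElem

abbrev Stack := List StackElem
abbrev Config := Code × Env × Stack

/-- The CES machine transition relation. -/
inductive Step : Config → Config → Prop where
  | var {n : Nat} {c : Code} {e : Env} {s : Stack} {v : Value} :
      e[n]? = some v →
      Step (.seq (.var n) c, e, s) (c, e, .val v :: s)
  | clos {c' c : Code} {e : Env} {s : Stack} :
      Step (.seq (.clos c') c, e, s) (c, e, .val (.clos c' e) :: s)
  | appl {c c' : Code} {e e' : Env} {v : Value} {s : Stack} :
      Step (.seq .appl c, e, .val v :: .val (.clos c' e') :: s)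
           (c', v :: e', .cont c e :: s)
  | ret {c : Code} {e e' : Env} {v : Value} {s : Stack} :
      Step (.RET, e, .val v :: .cont c e' :: s) (c, e', .val v :: s)
  | lit {n : Nat} {c : Code} {e : Env} {s : Stack} :
      Step (.seq (.lit n) c, e, s) (c, e, .val (.nat n) :: s)
  | op {f : Nat → Nat → Nat} {c : Code} {e : Env} {n₁ n₂ : Nat} {s : Stack} :
      Step (.seq (.op f) c, e, .val (.nat n₁) :: .val (.nat n₂) :: s)
           (c, e, .val (.nat (f n₁ n₂)) :: s)
  | cond0 {c c' : Code} {e : Env} {s : Stack} :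
      Step (.cond c c', e, .val (.nat 0) :: s) (c, e, s)
  | condS {c c' : Code} {e : Env} {n : Nat} {s : Stack} :
      Step (.cond c c', e, .val (.nat (n+1)) :: s) (c', e, s)

end CES

namespace CESH

abbrev Ptr : Type := Nat

inductive Value : Type where
  | nat : Nat → Value
  | clos : Ptr → Value

abbrev Env := List Value
abbrev Closure := Code × Env

inductive StackElem : Type where
  | val : Value → StackElem
  | cont : Closure → StackElem

abbrev Stack := List StackElem
abbrev Heap := List Closure
abbrev Config := Code × Env × Stack × Heap

/-- The CESH machine transition relation, with a list-based heap. -/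
inductive Step : Config → Config → Prop where
  | var {n : Nat} {c : Code} {e : Env} {s : Stack} {h : Heap} {v : Value} :
      e[n]? = some v →
      Step (.seq (.var n) c, e, s, h) (c, e, .val v :: s, h)
  | clos {c' c : Code} {e : Env} {s : Stack} {h : Heap} :
      Step (.seq (.clos c') c, e, s, h)
           (c, e, .val (.clos h.length) :: s, h ++ [(c', e)])
  | appl {c c' : Code} {e e' : Env} {v : Value} {ptr : Ptr} {s : Stack} {h : Heap} :
      h[ptr]? = some (c', e') →
      Step (.seq .appl c, e, .val v :: .val (.clos ptr) :: s, h)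
           (c', v :: e', .cont (c, e) :: s, h)
  | ret {c : Code} {e e' : Env} {v : Value} {s : Stack} {h : Heap} :
      Step (.RET, e, .val v :: .cont (c, e') :: s, h) (c, e', .val v :: s, h)
  | lit {n : Nat} {c : Code} {e : Env} {s : Stack} {h : Heap} :
      Step (.seq (.lit n) c, e, s, h) (c, e, .val (.nat n) :: s, h)
  | op {f : Nat → Nat → Nat} {c : Code} {e : Env} {n₁ n₂ : Nat} {s : Stack} {h : Heap} :
      Step (.seq (.op f) c, e, .val (.nat n₁) :: .val (.nat n₂) :: s, h)
           (c, e, .val (.nat (f n₁ n₂)) :: s, h)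
  | cond0 {c c' : Code} {e : Env} {s : Stack} {h : Heap} :
      Step (.cond c c', e, .val (.nat 0) :: s, h) (c, e, s, h)
  | condS {c c' : Code} {e : Env} {n : Nat} {s : Stack} {h : Heap} :
      Step (.cond c c', e, .val (.nat (n+1)) :: s, h) (c', e, s, h)

end CESH

mutual
/-- Relation between CES values and CESH values, parameterised by the CESH heap:
equal naturals are related, and a CES closure is related to a pointer that
dereferences to a componentwise-related CESH closure. -/
inductive RVal (h : CESH.Heap) : CES.Value → CESH.Value → Prop where
  | nat {n : Nat} : RVal h (.nat n) (.nat n)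
  | clos {c : Code} {e₁ : CES.Env} {e₂ : CESH.Env} {ptr : CESH.Ptr} :
      h[ptr]? = some (c, e₂) → REnv h e₁ e₂ → RVal h (.clos c e₁) (.clos ptr)
/-- Pointwise relation between CES and CESH environments. -/
inductive REnv (h : CESH.Heap) : CES.Env → CESH.Env → Prop where
  | nil : REnv h [] []
  | cons {v₁ : CES.Value} {e₁ : CES.Env} {v₂ : CESH.Value} {e₂ : CESH.Env} :
      RVal h v₁ v₂ → REnv h e₁ e₂ → REnv h (v₁ :: e₁) (v₂ :: e₂)
end

/-- Relation between CES closures and CESH closures: equal code, related environments. -/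
def RClos (h : CESH.Heap) (cl₁ : Code × CES.Env) (cl₂ : CESH.Closure) : Prop :=
  cl₁.1 = cl₂.1 ∧ REnv h cl₁.2 cl₂.2

/-- Relation between CES and CESH stack elements. -/
inductive RStackElem (h : CESH.Heap) : CES.StackElem → CESH.StackElem → Prop where
  | val {v₁ : CES.Value} {v₂ : CESH.Value} :
      RVal h v₁ v₂ → RStackElem h (.val v₁) (.val v₂)
  | cont {c : Code} {e₁ : CES.Env} {e₂ : CESH.Env} :
      REnv h e₁ e₂ → RStackElem h (.cont c e₁) (.cont (c, e₂))

/-- Pointwise relation between stacks. -/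
def RStack (h : CESH.Heap) : CES.Stack → CESH.Stack → Prop :=
  List.Forall₂ (RStackElem h)

/-- The relation between CES and CESH configurations. -/
def RCfg : CES.Config → CESH.Config → Prop :=
  fun cfg₁ cfg₂ =>
    match cfg₁, cfg₂ with
    | (c₁, e₁, s₁), (c₂, e₂, s₂, h) => c₁ = c₂ ∧ REnv h e₁ e₂ ∧ RStack h s₁ s₂

/-!
A CESH configuration can only step when its code, environment length and stack shape allow it,
and `RCfg` preserves exactly these: related configurations share their code, related environments
have equal length, and related stack elements and values have the same head constructor
(`nat n` is related only to `nat n`, closures only to pointers, continuations only to continuations).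
-/

section Inversion

variable {h : CESH.Heap}

theorem REnv.length_eq {e₁ : CES.Env} {e₂ : CESH.Env} (he : REnv h e₁ e₂) :
    e₁.length = e₂.length := by
  induction e₂ generalizing e₁ with
  | nil => cases he; rfl
  | cons _ _ ih => cases he with | cons _ he' => simp [ih he']

theorem REnv.exists_getElem?_eq_some {e₁ : CES.Env} {e₂ : CESH.Env} (he : REnv h e₁ e₂)
    {n : Nat} {v : CESH.Value} (hget : e₂[n]? = some v) : ∃ v₁, e₁[n]? = some v₁ := by
  have hn : n < e₁.length := he.length_eq ▸ (List.getElem?_eq_some_iff.1 hget).1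
  exact ⟨e₁[n], List.getElem?_eq_getElem hn⟩

theorem RVal.eq_nat {v₁ : CES.Value} {n : Nat} (hv : RVal h v₁ (.nat n)) : v₁ = .nat n := by
  cases hv; rfl

theorem RVal.exists_eq_clos {v₁ : CES.Value} {ptr : CESH.Ptr} (hv : RVal h v₁ (.clos ptr)) :
    ∃ c e, v₁ = .clos c e := by
  cases hv; exact ⟨_, _, rfl⟩

variable {s₁ : CES.Stack} {s₂ : CESH.Stack}

theorem RStack.exists_eq_val_cons {v : CESH.Value} (hs : RStack h s₁ (.val v :: s₂)) :
    ∃ v₁ s₁', s₁ = .val v₁ :: s₁' ∧ RVal h v₁ v ∧ RStack h s₁' s₂ := by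
  obtain ⟨_, s₁', hx, hs', rfl⟩ := List.forall₂_cons_right_iff.1 hs
  cases hx with | val hv => exact ⟨_, s₁', rfl, hv, hs'⟩

theorem RStack.exists_eq_nat_cons {n : Nat} (hs : RStack h s₁ (.val (.nat n) :: s₂)) :
    ∃ s₁', s₁ = .val (.nat n) :: s₁' ∧ RStack h s₁' s₂ := by
  obtain ⟨_, s₁', rfl, hv, hs'⟩ := hs.exists_eq_val_cons
  exact ⟨s₁', by rw [hv.eq_nat], hs'⟩

theorem RStack.exists_eq_clos_cons {ptr : CESH.Ptr} (hs : RStack h s₁ (.val (.clos ptr) :: s₂)) :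
    ∃ c e s₁', s₁ = .val (.clos c e) :: s₁' := by
  obtain ⟨_, s₁', rfl, hv, -⟩ := hs.exists_eq_val_cons
  obtain ⟨c, e, rfl⟩ := hv.exists_eq_clos
  exact ⟨c, e, s₁', rfl⟩

theorem RStack.exists_eq_cont_cons {cl : CESH.Closure} (hs : RStack h s₁ (.cont cl :: s₂)) :
    ∃ e s₁', s₁ = .cont cl.1 e :: s₁' := by
  obtain ⟨_, s₁', hx, -, rfl⟩ := List.forall₂_cons_right_iff.1 hs
  cases hx; exact ⟨_, s₁', rfl⟩

end Inversion

/-- The inverse of `RCfg` is a presimulation: a CESH step from a related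
configuration can be matched by some CES step. -/
theorem RCfg_presimulation (cfg₂ cfg₂' : CESH.Config) (cfg₁ : CES.Config)
    (hstep : CESH.Step cfg₂ cfg₂') (hR : RCfg cfg₁ cfg₂) :
    ∃ cfg₁', CES.Step cfg₁ cfg₁' := by
  obtain ⟨c₁, e₁, s₁⟩ := cfg₁
  obtain ⟨c₂, e₂, s₂, h⟩ := cfg₂
  obtain ⟨rfl, he, hs⟩ := hR
  cases hstep with
  | var hget =>
    obtain ⟨_, hv⟩ := he.exists_getElem?_eq_some hget
    exact ⟨_, .var hv⟩
  | clos => exact ⟨_, .clos⟩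
  | lit => exact ⟨_, .lit⟩
  | appl =>
    obtain ⟨_, _, rfl, -, hs'⟩ := hs.exists_eq_val_cons
    obtain ⟨_, _, _, rfl⟩ := hs'.exists_eq_clos_cons
    exact ⟨_, .appl⟩
  | ret =>
    obtain ⟨_, _, rfl, -, hs'⟩ := hs.exists_eq_val_cons
    obtain ⟨_, _, rfl⟩ := hs'.exists_eq_cont_cons
    exact ⟨_, .ret⟩
  | op =>
    obtain ⟨_, rfl, hs'⟩ := hs.exists_eq_nat_cons
    obtain ⟨_, rfl, -⟩ := hs'.exists_eq_nat_cons
    exact ⟨_, .op⟩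
  | cond0 =>
    obtain ⟨_, rfl, -⟩ := hs.exists_eq_nat_cons
    exact ⟨_, .cond0⟩
  | condS =>
    obtain ⟨_, rfl, -⟩ := hs.exists_eq_nat_cons
    exact ⟨_, .condS⟩
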